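/- Fix integers k ≥ 1 and n > k. The following three quantities are equal: (i) the infimum over all m ≥ 1 and type distributions G over m types for n agents of sup_{J∈{1,...,m}, ρ∈(0,1]} innerLP^{OST(J,ρ)/Proph}_{k,n}(G); (ii) the infimum over all m and G of sup_{J,ρ} innerLP^{OST(J,ρ)/ExAnte}_{k,n}(G); (iii) the infimum over all m and G of sup_{J,ρ} min{ P(Σ_{i=1}^{n-1} X_i(J,ρ) < k), E[min{Σ_{i=1}^{n-1} X_i(J,ρ), k}]/k }, where X_1(J,ρ), ..., X_{n-1}(J,ρ) are independent Bernoulli random variables with success probabilities τ_i(J,ρ) = (1-ρ)·G_{i,J-1} + ρ·G_{iJ}. -/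

import Mathlib

open Finset

/-- The polytope `P(k,n)` of state/acceptance probability vectors. -/
def memP (k n : ℕ) (x y : ℕ → ℕ → ℝ) : Prop :=
  x 1 k = 1 ∧
  (∀ l, 1 ≤ l → l < k → x 1 l = 0) ∧
  (∀ i ∈ Finset.Icc 2 n, ∀ l ∈ Finset.Icc 1 k,
    x i l = x (i-1) l - y (i-1) l + (if l < k then y (i-1) (l+1) else 0)) ∧
  (∀ i ∈ Finset.Icc 1 n, ∀ l ∈ Finset.Icc 1 k, 0 ≤ y i l ∧ y i l ≤ x i l)

/-- `G` is a valid family of type distributions over `m` types for `n` agents. -/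
def IsTypeDist (n m : ℕ) (G : ℕ → ℕ → ℝ) : Prop :=
  ∀ i ∈ Finset.Icc 1 n, G i 0 = 0 ∧ G i m = 1 ∧ ∀ j ∈ Finset.Icc 1 m, G i (j-1) ≤ G i j

/-- `E[min{X_1+...+X_t, k}]` for independent Bernoulli `X_i` with success probabilities `p i`. -/
noncomputable def eMinBer (p : ℕ → ℝ) (t k : ℕ) : ℝ :=
  ∑ S ∈ (Finset.Icc 1 t).powerset,
    (∏ i ∈ S, p i) * (∏ i ∈ Finset.Icc 1 t \ S, (1 - p i)) * min (S.card : ℝ) (k : ℝ)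

/-- `P(X_1+...+X_t < k)` for independent Bernoulli `X_i` with success probabilities `p i`. -/
noncomputable def probLt (p : ℕ → ℝ) (t k : ℕ) : ℝ :=
  ∑ S ∈ (Finset.Icc 1 t).powerset.filter (fun S => S.card < k),
    (∏ i ∈ S, p i) * ∏ i ∈ Finset.Icc 1 t \ S, (1 - p i)

noncomputable def QProph (k n : ℕ) (G : ℕ → ℕ → ℝ) (j : ℕ) : ℝ :=
  eMinBer (fun i => G i j) n k

noncomputable def QExAnte (k n : ℕ) (G : ℕ → ℕ → ℝ) (j : ℕ) : ℝ :=
  min (∑ i ∈ Finset.Icc 1 n, G i j) (k : ℝ)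

noncomputable def coverSum (k n : ℕ) (G : ℕ → ℕ → ℝ) (j : ℕ) (x y : ℕ → ℕ → ℝ) : ℝ :=
  ∑ i ∈ Finset.Icc 1 n, ∑ l ∈ Finset.Icc 1 k, min (y i l) (G i j * x i l)

/-- `τ_i(J,ρ)`. -/
noncomputable def tauOf (G : ℕ → ℕ → ℝ) (J : ℕ) (ρ : ℝ) (i : ℕ) : ℝ :=
  (1 - ρ) * G i (J-1) + ρ * G i J

/-- The simplified dual LP `innerLP^{OST(J,ρ)/·}_{k,n}(G)` with coefficients `Q`. -/
noncomputable def innerLP_OST (k n m : ℕ) (G : ℕ → ℕ → ℝ) (J : ℕ) (ρ : ℝ) (Q : ℕ → ℝ) : ℝ :=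
  sSup {θ : ℝ | ∃ x y, memP k n x y ∧
    (∀ i ∈ Finset.Icc 1 n, ∀ l ∈ Finset.Icc 1 k, y i l = tauOf G J ρ i * x i l) ∧
    ∀ j ∈ Finset.Icc 1 m, θ * Q j ≤ coverSum k n G j x y}

/-!
Once the thresholds `τ = τ(J, ρ)` are fixed the LP has a single feasible `x`: `x_i^l` is the
probability that `l` units remain when agent `i` arrives, so `∑_l x_i^l = P(S_{i-1} < k)` for
`S_t = X_1 + ⋯ + X_t`, `X_i ∼ Ber(τ_i)`, and the constraint of type `j` reads
`θ Q_j ≤ ∑_i min(τ_i, G_ij) P(S_{i-1} < k)`. For `j` below the threshold type the right side is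
at least `P(S_{n-1} < k) ∑_i G_ij`, for `j` above it equals `E[min(S_n, k)] ≥ E[min(S_{n-1}, k)]`;
as both benchmarks satisfy `Q_j ≤ min(∑_i G_ij, k)`, each LP value is at least
`min{P(S_{n-1} < k), E[min(S_{n-1}, k)]/k}`, and `Q^Proph ≤ Q^ExAnte` orders the two LPs.

Conversely, sliding `(J, ρ)` from the all-zero to the all-one thresholds, the intermediate value
theorem gives a point `t` where the two terms of that minimum agree. The three-type instance in
which agents `i < n` have type `2` with probability `t_i` and agent `n` has the top type `1` with a
small probability `q` holds every threshold to within `q/k` of this common value: thresholds below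
type `3` are tested against type `3`, and threshold `3` against type `1`.
-/

lemma mapsTo_Icc_one_of_le {p : ℕ → ℝ} {t t' : ℕ} {s : Set ℝ}
    (hp : Set.MapsTo p (Set.Icc 1 t) s) (h : t' ≤ t) : Set.MapsTo p (Set.Icc 1 t') s :=
  hp.mono_left (Set.Icc_subset_Icc_right h)

/-- `E[g(X_1 + ⋯ + X_t)]` for independent `X_i ∼ Bernoulli(p i)`. -/
noncomputable def bernExpect (p : ℕ → ℝ) (t : ℕ) (g : ℕ → ℝ) : ℝ :=
  ∑ S ∈ (Icc 1 t).powerset, (∏ i ∈ S, p i) * (∏ i ∈ Icc 1 t \ S, (1 - p i)) * g S.card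

namespace bernExpect

variable {p q : ℕ → ℝ} {t : ℕ} {g h : ℕ → ℝ}

@[simp] lemma zero_length : bernExpect p 0 g = g 0 := by
  simp [bernExpect]

lemma succ_length (p : ℕ → ℝ) (t : ℕ) (g : ℕ → ℝ) :
    bernExpect p (t + 1) g =
      (1 - p (t + 1)) * bernExpect p t g + p (t + 1) * bernExpect p t (fun c => g (c + 1)) := by
  have hnot : t + 1 ∉ Icc 1 t := by simp
  rw [bernExpect, ← insert_Icc_right_eq_Icc_add_one (by omega), sum_powerset_insert hnot,
    bernExpect, bernExpect, mul_sum, mul_sum]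
  congr 1 <;> refine sum_congr rfl fun S hS => ?_ <;> have hS := mem_powerset.1 hS
  · rw [insert_sdiff_of_notMem _ fun h => hnot (hS h), prod_insert (by simp)]
    ring
  · have htS : t + 1 ∉ S := fun h => hnot (hS h)
    rw [insert_sdiff_insert, sdiff_insert_of_notMem hnot, prod_insert htS,
      card_insert_of_notMem htS]
    ring

lemma add : bernExpect p t (g + h) = bernExpect p t g + bernExpect p t h := by
  simp only [bernExpect, Pi.add_apply, mul_add, sum_add_distrib]

lemma neg : bernExpect p t (fun c => -g c) = -bernExpect p t g := by
  simp only [bernExpect, mul_neg, sum_neg_distrib]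

lemma sum {ι : Type*} (s : Finset ι) (g : ι → ℕ → ℝ) :
    ∑ l ∈ s, bernExpect p t (g l) = bernExpect p t (fun c => ∑ l ∈ s, g l c) := by
  simp only [bernExpect, mul_sum]
  exact sum_comm

lemma const (a : ℝ) : bernExpect p t (fun _ => a) = a := by
  rw [bernExpect, ← sum_mul, ← prod_add]
  simp

lemma mono (hp : Set.MapsTo p (Set.Icc 1 t) (Set.Icc 0 1)) (hgh : ∀ c, g c ≤ h c) :
    bernExpect p t g ≤ bernExpect p t h := by
  refine sum_le_sum fun S hS => mul_le_mul_of_nonneg_left (hgh _) ?_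
  have hS := mem_powerset.1 hS
  exact mul_nonneg (prod_nonneg fun i hi => (hp (mem_Icc.1 (hS hi))).1)
    (prod_nonneg fun i hi => sub_nonneg.2 (hp (mem_Icc.1 (mem_sdiff.1 hi).1)).2)

lemma nonneg (hp : Set.MapsTo p (Set.Icc 1 t) (Set.Icc 0 1)) (hg : ∀ c, 0 ≤ g c) :
    0 ≤ bernExpect p t g :=
  (const (p := p) (t := t) 0).symm.le.trans (mono hp hg)

lemma le_const (hp : Set.MapsTo p (Set.Icc 1 t) (Set.Icc 0 1)) {a : ℝ} (hg : ∀ c, g c ≤ a) :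
    bernExpect p t g ≤ a :=
  (mono hp hg).trans (const a).le

lemma succ_length_le_of_antitone (hp : Set.MapsTo p (Set.Icc 1 (t + 1)) (Set.Icc 0 1))
    (hg : Antitone g) : bernExpect p (t + 1) g ≤ bernExpect p t g := by
  have hle : bernExpect p t (fun c => g (c + 1)) ≤ bernExpect p t g :=
    mono (mapsTo_Icc_one_of_le hp t.le_succ) fun c => hg c.le_succ
  have := (hp ⟨le_add_self, le_rfl⟩).1
  rw [succ_length]
  nlinarith

lemma length_antitone_of_antitone {t' : ℕ} (hp : Set.MapsTo p (Set.Icc 1 t') (Set.Icc 0 1))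
    (hg : Antitone g) (htt' : t ≤ t') : bernExpect p t' g ≤ bernExpect p t g := by
  induction t', htt' using Nat.le_induction with
  | base => exact le_rfl
  | succ t' htt' ih =>
    exact (succ_length_le_of_antitone hp hg).trans (ih (mapsTo_Icc_one_of_le hp t'.le_succ))

lemma mono_prob_of_monotone (hp : Set.MapsTo p (Set.Icc 1 t) (Set.Icc 0 1))
    (hq : Set.MapsTo q (Set.Icc 1 t) (Set.Icc 0 1)) (hpq : ∀ i ∈ Set.Icc 1 t, p i ≤ q i)
    (hg : Monotone g) : bernExpect p t g ≤ bernExpect q t g := by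
  induction t generalizing g with
  | zero => simp
  | succ t ih =>
    have hp' := mapsTo_Icc_one_of_le hp t.le_succ
    have hq' := mapsTo_Icc_one_of_le hq t.le_succ
    have hpq' : ∀ i ∈ Set.Icc 1 t, p i ≤ q i := fun i hi => hpq i ⟨hi.1, hi.2.trans t.le_succ⟩
    have htop : t + 1 ∈ Set.Icc 1 (t + 1) := ⟨le_add_self, le_rfl⟩
    have h₁ := ih hp' hq' hpq' hg
    have h₂ := ih hp' hq' hpq' fun a b hab => hg (Nat.succ_le_succ hab)
    have h₃ : bernExpect q t g ≤ bernExpect q t (fun c => g (c + 1)) :=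
      mono hq' fun c => hg c.le_succ
    have hpt := hp htop
    have hpqt := hpq _ htop
    -- raising `p (t + 1)` to `q (t + 1)` moves weight from `g` to the larger `g (· + 1)`
    rw [succ_length, succ_length]
    nlinarith [hpt.1, hpt.2]

lemma anti_prob_of_antitone (hp : Set.MapsTo p (Set.Icc 1 t) (Set.Icc 0 1))
    (hq : Set.MapsTo q (Set.Icc 1 t) (Set.Icc 0 1)) (hpq : ∀ i ∈ Set.Icc 1 t, p i ≤ q i)
    (hg : Antitone g) : bernExpect q t g ≤ bernExpect p t g := by
  have := mono_prob_of_monotone hp hq hpq hg.neg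
  rwa [neg, neg, neg_le_neg_iff] at this

lemma of_eq_zero (hp : ∀ i ∈ Set.Icc 1 t, p i = 0) : bernExpect p t g = g 0 := by
  induction t with
  | zero => simp
  | succ t ih =>
    rw [succ_length, hp _ ⟨le_add_self, le_rfl⟩, ih fun i hi => hp i ⟨hi.1, hi.2.trans t.le_succ⟩]
    ring

lemma of_eq_one (hp : ∀ i ∈ Set.Icc 1 t, p i = 1) : bernExpect p t g = g t := by
  induction t generalizing g with
  | zero => simp
  | succ t ih =>
    rw [succ_length, hp _ ⟨le_add_self, le_rfl⟩,
      ih (g := fun c => g (c + 1)) fun i hi => hp i ⟨hi.1, hi.2.trans t.le_succ⟩]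
    ring

lemma continuous_of_continuous {p : ℝ → ℕ → ℝ} (hp : ∀ i, Continuous fun ρ => p ρ i) :
    Continuous fun ρ => bernExpect (p ρ) t g := by
  unfold bernExpect
  fun_prop

end bernExpect

lemma eMinBer_eq_bernExpect (p : ℕ → ℝ) (t k : ℕ) :
    eMinBer p t k = bernExpect p t (fun c => min (c : ℝ) k) := rfl

lemma probLt_eq_bernExpect (p : ℕ → ℝ) (t k : ℕ) :
    probLt p t k = bernExpect p t (fun c => if c < k then 1 else 0) := by
  simp only [probLt, bernExpect, sum_filter, mul_ite, mul_one, mul_zero]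

section Bernoulli

variable {p q : ℕ → ℝ} {t k : ℕ}

lemma antitone_lt_indicator : Antitone fun c : ℕ => if c < k then (1 : ℝ) else 0 :=
  fun a b hab => by dsimp only; split_ifs <;> first | omega | norm_num

lemma probLt_nonneg (hp : Set.MapsTo p (Set.Icc 1 t) (Set.Icc 0 1)) : 0 ≤ probLt p t k := by
  rw [probLt_eq_bernExpect]
  exact bernExpect.nonneg hp fun c => by split_ifs <;> norm_num

lemma probLt_le_one (hp : Set.MapsTo p (Set.Icc 1 t) (Set.Icc 0 1)) : probLt p t k ≤ 1 := by
  rw [probLt_eq_bernExpect]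
  exact bernExpect.le_const hp fun c => by split_ifs <;> norm_num

lemma eMinBer_nonneg (hp : Set.MapsTo p (Set.Icc 1 t) (Set.Icc 0 1)) : 0 ≤ eMinBer p t k := by
  rw [eMinBer_eq_bernExpect]
  exact bernExpect.nonneg hp fun _ => by positivity

lemma eMinBer_le (hp : Set.MapsTo p (Set.Icc 1 t) (Set.Icc 0 1)) : eMinBer p t k ≤ k :=
  bernExpect.le_const hp fun _ => min_le_right _ _

/-- Agent `t + 1` adds to `min{S, k}` exactly when it is accepted while `S < k`. -/
lemma eMinBer_succ (p : ℕ → ℝ) (t k : ℕ) :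
    eMinBer p (t + 1) k = eMinBer p t k + p (t + 1) * probLt p t k := by
  have hstep : (fun c : ℕ => min ((c + 1 : ℕ) : ℝ) k) =
      (fun c : ℕ => min (c : ℝ) k) + fun c => if c < k then 1 else 0 := by
    ext c
    simp only [Pi.add_apply]
    split_ifs with h
    · rw [min_eq_left (by exact_mod_cast h), min_eq_left (by exact_mod_cast h.le)]
      push_cast; ring
    · rw [min_eq_right (by exact_mod_cast (by omega : k ≤ c + 1)),
        min_eq_right (by exact_mod_cast (not_lt.1 h))]
      ring
  rw [eMinBer_eq_bernExpect, bernExpect.succ_length, hstep, bernExpect.add,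
    ← eMinBer_eq_bernExpect, ← probLt_eq_bernExpect]
  ring

lemma eMinBer_eq_sum (p : ℕ → ℝ) (t k : ℕ) :
    eMinBer p t k = ∑ i ∈ Icc 1 t, p i * probLt p (i - 1) k := by
  induction t with
  | zero => simp [eMinBer]
  | succ t ih => rw [sum_Icc_succ_top (by omega), ← ih, eMinBer_succ, Nat.add_sub_cancel]

lemma eMinBer_le_sum (hp : Set.MapsTo p (Set.Icc 1 t) (Set.Icc 0 1)) :
    eMinBer p t k ≤ ∑ i ∈ Icc 1 t, p i := by
  rw [eMinBer_eq_sum]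
  refine sum_le_sum fun i hi => ?_
  have hi := mem_Icc.1 hi
  exact mul_le_of_le_one_right (hp hi).1 (probLt_le_one (mapsTo_Icc_one_of_le hp (by omega)))

lemma eMinBer_pred_le (hp : Set.MapsTo p (Set.Icc 1 t) (Set.Icc 0 1)) :
    eMinBer p (t - 1) k ≤ eMinBer p t k := by
  rcases t with _ | t
  · exact le_rfl
  rw [Nat.add_sub_cancel, eMinBer_succ]
  have := probLt_nonneg (k := k) (mapsTo_Icc_one_of_le hp t.le_succ)
  have := (hp ⟨le_add_self, le_rfl⟩).1
  nlinarith

lemma eMinBer_succ_le (hp : Set.MapsTo p (Set.Icc 1 (t + 1)) (Set.Icc 0 1)) :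
    eMinBer p (t + 1) k ≤ eMinBer p t k + p (t + 1) := by
  rw [eMinBer_succ]
  have := probLt_le_one (k := k) (mapsTo_Icc_one_of_le hp t.le_succ)
  have := (hp ⟨le_add_self, le_rfl⟩).1
  nlinarith

lemma probLt_antitone_length {t' : ℕ} (hp : Set.MapsTo p (Set.Icc 1 t') (Set.Icc 0 1))
    (htt' : t ≤ t') : probLt p t' k ≤ probLt p t k := by
  simp only [probLt_eq_bernExpect]
  exact bernExpect.length_antitone_of_antitone hp antitone_lt_indicator htt'

lemma probLt_anti_prob (hp : Set.MapsTo p (Set.Icc 1 t) (Set.Icc 0 1))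
    (hq : Set.MapsTo q (Set.Icc 1 t) (Set.Icc 0 1)) (hpq : ∀ i ∈ Set.Icc 1 t, p i ≤ q i) :
    probLt q t k ≤ probLt p t k := by
  simp only [probLt_eq_bernExpect]
  exact bernExpect.anti_prob_of_antitone hp hq hpq antitone_lt_indicator

lemma eMinBer_mono_prob (hp : Set.MapsTo p (Set.Icc 1 t) (Set.Icc 0 1))
    (hq : Set.MapsTo q (Set.Icc 1 t) (Set.Icc 0 1)) (hpq : ∀ i ∈ Set.Icc 1 t, p i ≤ q i) :
    eMinBer p t k ≤ eMinBer q t k := by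
  simp only [eMinBer_eq_bernExpect]
  exact bernExpect.mono_prob_of_monotone hp hq hpq fun a b hab => by gcongr

lemma probLt_of_eq_zero (hp : ∀ i ∈ Set.Icc 1 t, p i = 0) (hk : 1 ≤ k) : probLt p t k = 1 := by
  rw [probLt_eq_bernExpect, bernExpect.of_eq_zero hp, if_pos (show 0 < k from hk)]

lemma eMinBer_of_eq_zero (hp : ∀ i ∈ Set.Icc 1 t, p i = 0) : eMinBer p t k = 0 := by
  rw [eMinBer_eq_bernExpect, bernExpect.of_eq_zero hp]
  simp

lemma probLt_of_eq_one (hp : ∀ i ∈ Set.Icc 1 t, p i = 1) (hk : k ≤ t) : probLt p t k = 0 := by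
  rw [probLt_eq_bernExpect, bernExpect.of_eq_one hp, if_neg (not_lt.2 hk)]

lemma eMinBer_of_eq_one (hp : ∀ i ∈ Set.Icc 1 t, p i = 1) (hk : k ≤ t) : eMinBer p t k = k := by
  rw [eMinBer_eq_bernExpect, bernExpect.of_eq_one hp]
  exact min_eq_right (by exact_mod_cast hk)

end Bernoulli

noncomputable def maxScale (s : Finset ℕ) (Q c : ℕ → ℝ) : ℝ :=
  sSup {θ : ℝ | ∀ j ∈ s, θ * Q j ≤ c j}

section maxScale

variable {s : Finset ℕ} {Q Q' c : ℕ → ℝ} {j₀ : ℕ}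

lemma bddAbove_maxScale (hj₀ : j₀ ∈ s) (hQ : 0 < Q j₀) :
    BddAbove {θ : ℝ | ∀ j ∈ s, θ * Q j ≤ c j} :=
  ⟨c j₀ / Q j₀, fun _ hθ => (le_div_iff₀ hQ).2 (hθ j₀ hj₀)⟩

lemma le_maxScale (hj₀ : j₀ ∈ s) (hQ : 0 < Q j₀) {θ : ℝ} (hθ : ∀ j ∈ s, θ * Q j ≤ c j) :
    θ ≤ maxScale s Q c :=
  le_csSup (bddAbove_maxScale hj₀ hQ) hθ

lemma maxScale_le (hj₀ : j₀ ∈ s) (hQ : 0 < Q j₀) {b : ℝ} (hb : 0 ≤ b) (hc : c j₀ ≤ b * Q j₀) :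
    maxScale s Q c ≤ b :=
  Real.sSup_le (fun _ hθ => le_of_mul_le_mul_right ((hθ j₀ hj₀).trans hc) hQ) hb

lemma maxScale_anti (hj₀ : j₀ ∈ s) (hQ' : 0 < Q' j₀) (hQ'0 : ∀ j ∈ s, 0 ≤ Q' j)
    (hQQ' : ∀ j ∈ s, Q' j ≤ Q j) (hc : ∀ j ∈ s, 0 ≤ c j) :
    maxScale s Q c ≤ maxScale s Q' c := by
  refine csSup_le_csSup (bddAbove_maxScale hj₀ hQ') ⟨0, fun j hj => by simpa using hc j hj⟩ ?_
  intro θ hθ j hj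
  rcases le_total θ 0 with hθ0 | hθ0
  · exact (mul_nonpos_of_nonpos_of_nonneg hθ0 (hQ'0 j hj)).trans (hc j hj)
  · exact (mul_le_mul_of_nonneg_left (hQQ' j hj) hθ0).trans (hθ j hj)

end maxScale

noncomputable def ostCover (k n : ℕ) (G : ℕ → ℕ → ℝ) (τ : ℕ → ℝ) (j : ℕ) : ℝ :=
  ∑ i ∈ Icc 1 n, min (τ i) (G i j) * probLt τ (i - 1) k

/-- `x_i^l`: the probability that `l` units of capacity remain when agent `i` arrives. -/
noncomputable def capacityProb (k : ℕ) (τ : ℕ → ℝ) (i l : ℕ) : ℝ :=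
  bernExpect τ (i - 1) fun c => if c + l = k then 1 else 0

section capacityProb

variable {k n : ℕ} {τ : ℕ → ℝ}

lemma capacityProb_nonneg {i : ℕ} (hτ : Set.MapsTo τ (Set.Icc 1 (i - 1)) (Set.Icc 0 1)) (l : ℕ) :
    0 ≤ capacityProb k τ i l :=
  bernExpect.nonneg hτ fun c => by split_ifs <;> norm_num

lemma capacityProb_succ {i : ℕ} (hi : 1 ≤ i) (l : ℕ) :
    capacityProb k τ (i + 1) l = capacityProb k τ i l - τ i * capacityProb k τ i l +
      if l < k then τ i * capacityProb k τ i (l + 1) else 0 := by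
  obtain ⟨s, rfl⟩ := Nat.exists_eq_add_of_le' hi
  have hshift : (fun c : ℕ => if c + 1 + l = k then (1 : ℝ) else 0) =
      if l < k then fun c => if c + (l + 1) = k then 1 else 0 else fun _ => 0 := by
    split_ifs <;> ext c <;> split_ifs <;> first | rfl | (exfalso; omega)
  simp only [capacityProb, Nat.add_sub_cancel, bernExpect.succ_length, hshift]
  split_ifs <;> (try simp only [bernExpect.const]) <;> ring

lemma sum_capacityProb (i : ℕ) :
    ∑ l ∈ Icc 1 k, capacityProb k τ i l = probLt τ (i - 1) k := by
  simp only [capacityProb, bernExpect.sum, probLt_eq_bernExpect]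
  congr 1
  ext c
  have hcond : ∀ l ∈ Icc 1 k, (c + l = k ↔ k - c = l) := fun l hl => by rw [mem_Icc] at hl; omega
  rw [sum_congr rfl fun l hl => if_congr (hcond l hl) rfl rfl, sum_ite_eq]
  split_ifs with h₁ h₂ h₂ <;> first | rfl | (rw [mem_Icc] at h₁; exfalso; omega)

lemma memP_capacityProb (hτ : Set.MapsTo τ (Set.Icc 1 n) (Set.Icc 0 1)) :
    memP k n (capacityProb k τ) (fun i l => τ i * capacityProb k τ i l) := by
  refine ⟨by simp [capacityProb], fun l hl hlk => by simp [capacityProb]; omega, ?_, ?_⟩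
  · intro i hi l _
    obtain ⟨i, rfl⟩ : ∃ i', i = i' + 1 := ⟨i - 1, by grind⟩
    simp only [Nat.add_sub_cancel]
    exact capacityProb_succ (by grind) l
  · intro i hi l _
    have hτi := hτ (mem_Icc.1 hi)
    have hx := capacityProb_nonneg (k := k) (i := i) (mapsTo_Icc_one_of_le hτ (by grind)) l
    exact ⟨mul_nonneg hτi.1 hx, mul_le_of_le_one_left hx hτi.2⟩

lemma eq_capacityProb_of_memP {x y : ℕ → ℕ → ℝ} (hP : memP k n x y)
    (hy : ∀ i ∈ Icc 1 n, ∀ l ∈ Icc 1 k, y i l = τ i * x i l) :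
    ∀ i ∈ Icc 1 n, ∀ l ∈ Icc 1 k, x i l = capacityProb k τ i l := by
  intro i hi
  obtain ⟨hi1, hin⟩ := mem_Icc.1 hi
  induction i, hi1 using Nat.le_induction with
  | base =>
    intro l hl
    obtain ⟨hl1, hlk⟩ := mem_Icc.1 hl
    rcases hlk.lt_or_eq with hlk | rfl
    · simp [capacityProb, hlk.ne, hP.2.1 l hl1 hlk]
    · simp [capacityProb, hP.1]
  | succ i hi1 ih =>
    intro l hl
    have hi : i ∈ Icc 1 n := mem_Icc.2 ⟨hi1, by omega⟩
    have ih := ih hi (by omega)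
    rw [hP.2.2.1 (i + 1) (mem_Icc.2 ⟨by omega, hin⟩) l hl, Nat.add_sub_cancel,
      capacityProb_succ hi1, hy i hi l hl, ih l hl]
    split_ifs with hlk
    · have hl' : l + 1 ∈ Icc 1 k := mem_Icc.2 ⟨by omega, hlk⟩
      rw [hy i hi (l + 1) hl', ih (l + 1) hl']
    · rfl

lemma coverSum_eq_ostCover (hτ : Set.MapsTo τ (Set.Icc 1 n) (Set.Icc 0 1))
    {x y : ℕ → ℕ → ℝ} (hP : memP k n x y)
    (hy : ∀ i ∈ Icc 1 n, ∀ l ∈ Icc 1 k, y i l = τ i * x i l) (G : ℕ → ℕ → ℝ) (j : ℕ) :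
    coverSum k n G j x y = ostCover k n G τ j := by
  refine sum_congr rfl fun i hi => ?_
  have hτ' : Set.MapsTo τ (Set.Icc 1 (i - 1)) (Set.Icc 0 1) :=
    mapsTo_Icc_one_of_le hτ (by grind)
  rw [← sum_capacityProb, mul_sum]
  refine sum_congr rfl fun l hl => ?_
  rw [hy i hi l hl, eq_capacityProb_of_memP hP hy i hi l hl,
    min_mul_of_nonneg _ _ (capacityProb_nonneg hτ' l)]

end capacityProb

/-- The feasible `x` is unique, so the LP collapses to a ratio test against `ostCover`. -/
lemma innerLP_OST_eq_maxScale {k n m J : ℕ} {G : ℕ → ℕ → ℝ} {ρ : ℝ} {Q : ℕ → ℝ}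
    (hτ : Set.MapsTo (tauOf G J ρ) (Set.Icc 1 n) (Set.Icc 0 1)) :
    innerLP_OST k n m G J ρ Q = maxScale (Icc 1 m) Q (ostCover k n G (tauOf G J ρ)) := by
  unfold innerLP_OST maxScale
  congr 1
  ext θ
  constructor
  · rintro ⟨x, y, hP, hy, hθ⟩ j hj
    rw [← coverSum_eq_ostCover hτ hP hy]
    exact hθ j hj
  · intro hθ
    have hP := memP_capacityProb (k := k) hτ
    refine ⟨_, _, hP, fun _ _ _ _ => rfl, fun j hj => ?_⟩
    rw [coverSum_eq_ostCover hτ hP fun _ _ _ _ => rfl]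
    exact hθ j hj

section TypeDist

variable {k n m J : ℕ} {G : ℕ → ℕ → ℝ} {ρ : ℝ}

lemma IsTypeDist.mono (hG : IsTypeDist n m G) {i : ℕ} (hi : i ∈ Icc 1 n) {j j' : ℕ}
    (hjj' : j ≤ j') (hj' : j' ≤ m) : G i j ≤ G i j' := by
  induction j', hjj' using Nat.le_induction with
  | base => exact le_rfl
  | succ j' _ ih =>
    exact (ih (by omega)).trans (by simpa using (hG i hi).2.2 (j' + 1) (by simp; omega))

lemma IsTypeDist.apply_mem_Icc (hG : IsTypeDist n m G) {i : ℕ} (hi : i ∈ Icc 1 n) {j : ℕ}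
    (hj : j ≤ m) :
    G i j ∈ Set.Icc 0 1 :=
  ⟨(hG i hi).1 ▸ hG.mono hi j.zero_le hj, (hG i hi).2.1 ▸ hG.mono hi hj le_rfl⟩

lemma IsTypeDist.tauOf_mem_Icc (hG : IsTypeDist n m G) (hJ : J ∈ Icc 1 m)
    (hρ : ρ ∈ Set.Icc (0 : ℝ) 1) {i : ℕ} (hi : i ∈ Icc 1 n) :
    tauOf G J ρ i ∈ Set.Icc (G i (J - 1)) (G i J) := by
  have := hG.mono hi (J.sub_le 1) (mem_Icc.1 hJ).2
  obtain ⟨hρ0, hρ1⟩ := hρ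
  constructor <;> unfold tauOf <;> nlinarith

lemma IsTypeDist.mapsTo_tauOf (hG : IsTypeDist n m G) (hJ : J ∈ Icc 1 m)
    (hρ : ρ ∈ Set.Icc (0 : ℝ) 1) : Set.MapsTo (tauOf G J ρ) (Set.Icc 1 n) (Set.Icc 0 1) := by
  intro i hi
  have hi := Finset.mem_Icc.2 hi
  have hτ := hG.tauOf_mem_Icc hJ hρ hi
  exact ⟨(hG.apply_mem_Icc hi (by grind)).1.trans hτ.1,
    hτ.2.trans (hG.apply_mem_Icc hi (mem_Icc.1 hJ).2).2⟩

lemma IsTypeDist.QProph_top (hG : IsTypeDist n m G) (hkn : k ≤ n) : QProph k n G m = k :=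
  eMinBer_of_eq_one (fun i hi => (hG i (Finset.mem_Icc.2 hi)).2.1) hkn

lemma IsTypeDist.QExAnte_top (hG : IsTypeDist n m G) (hkn : k ≤ n) : QExAnte k n G m = k := by
  rw [QExAnte, sum_congr rfl fun i hi => (hG i hi).2.1]
  simpa using hkn

lemma IsTypeDist.QProph_le_QExAnte (hG : IsTypeDist n m G) {j : ℕ} (hj : j ≤ m) :
    QProph k n G j ≤ QExAnte k n G j := by
  have hcol : Set.MapsTo (fun i => G i j) (Set.Icc 1 n) (Set.Icc 0 1) :=
    fun i hi => hG.apply_mem_Icc (Finset.mem_Icc.2 hi) hj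
  exact le_min (eMinBer_le_sum hcol) (eMinBer_le hcol)

end TypeDist

section ostCover

variable {k n : ℕ} {G : ℕ → ℕ → ℝ} {τ : ℕ → ℝ} {j : ℕ}

lemma ostCover_nonneg (hτ : Set.MapsTo τ (Set.Icc 1 n) (Set.Icc 0 1))
    (hG : ∀ i ∈ Icc 1 n, 0 ≤ G i j) : 0 ≤ ostCover k n G τ j :=
  sum_nonneg fun i hi => mul_nonneg (le_min (hτ (Finset.mem_Icc.1 hi)).1 (hG i hi))
    (probLt_nonneg (mapsTo_Icc_one_of_le hτ (by grind)))

lemma ostCover_le (hτ : Set.MapsTo τ (Set.Icc 1 n) (Set.Icc 0 1)) :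
    ostCover k n G τ j ≤ ∑ i ∈ Icc 1 n, G i j * probLt τ (i - 1) k :=
  sum_le_sum fun i hi => mul_le_mul_of_nonneg_right (min_le_right _ _)
    (probLt_nonneg (mapsTo_Icc_one_of_le hτ (by grind)))

lemma ostCover_of_le (h : ∀ i ∈ Icc 1 n, G i j ≤ τ i) :
    ostCover k n G τ j = ∑ i ∈ Icc 1 n, G i j * probLt τ (i - 1) k :=
  sum_congr rfl fun i hi => by rw [min_eq_right (h i hi)]

lemma ostCover_of_ge (h : ∀ i ∈ Icc 1 n, τ i ≤ G i j) : ostCover k n G τ j = eMinBer τ n k := by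
  rw [eMinBer_eq_sum]
  exact sum_congr rfl fun i hi => by rw [min_eq_left (h i hi)]

end ostCover

noncomputable def ostBenchmark (k n : ℕ) (τ : ℕ → ℝ) : ℝ :=
  min (probLt τ (n - 1) k) (eMinBer τ (n - 1) k / k)

lemma ostBenchmark_mem_Icc {k n : ℕ} {τ : ℕ → ℝ}
    (hτ : Set.MapsTo τ (Set.Icc 1 (n - 1)) (Set.Icc 0 1)) : ostBenchmark k n τ ∈ Set.Icc 0 1 :=
  ⟨le_min (probLt_nonneg hτ) (div_nonneg (eMinBer_nonneg hτ) k.cast_nonneg),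
    (min_le_left _ _).trans (probLt_le_one hτ)⟩

section innerLP

variable {k n m J : ℕ} {G : ℕ → ℕ → ℝ} {ρ : ℝ}

/-- Below the threshold type `J` the cover is bounded through `P(S_{n-1} < k)`, above it
through `E[min{S_{n-1}, k}]`. -/
lemma IsTypeDist.ostBenchmark_mul_le_ostCover (hG : IsTypeDist n m G) (hk : 1 ≤ k)
    (hJ : J ∈ Icc 1 m) (hρ : ρ ∈ Set.Icc (0 : ℝ) 1) {j : ℕ} (hj : j ∈ Icc 1 m) {a : ℝ}
    (ha : a ≤ ∑ i ∈ Icc 1 n, G i j) (hak : a ≤ k) :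
    ostBenchmark k n (tauOf G J ρ) * a ≤ ostCover k n G (tauOf G J ρ) j := by
  set τ := tauOf G J ρ
  have hτ := hG.mapsTo_tauOf hJ hρ
  have hτ' := mapsTo_Icc_one_of_le hτ (n.sub_le 1)
  have hf0 := (ostBenchmark_mem_Icc (k := k) hτ').1
  obtain ⟨hj1, hjm⟩ := mem_Icc.1 hj
  have hJm := (mem_Icc.1 hJ).2
  rcases lt_or_ge j J with hjJ | hJj
  · rw [ostCover_of_le fun i hi => (hG.mono hi (by omega) (by omega)).trans
      (hG.tauOf_mem_Icc hJ hρ hi).1]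
    calc ostBenchmark k n τ * a ≤ ostBenchmark k n τ * ∑ i ∈ Icc 1 n, G i j :=
          mul_le_mul_of_nonneg_left ha hf0
      _ ≤ ∑ i ∈ Icc 1 n, G i j * probLt τ (i - 1) k := by
          rw [mul_sum]
          refine sum_le_sum fun i hi => ?_
          rw [mul_comm]
          refine mul_le_mul_of_nonneg_left ((min_le_left _ _).trans ?_)
            (hG.apply_mem_Icc hi hjm).1
          exact probLt_antitone_length hτ' (by grind)
  · rw [ostCover_of_ge fun i hi => (hG.tauOf_mem_Icc hJ hρ hi).2.trans (hG.mono hi hJj hjm)]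
    have hk0 : (0 : ℝ) < k := by exact_mod_cast hk
    calc ostBenchmark k n τ * a ≤ ostBenchmark k n τ * k := mul_le_mul_of_nonneg_left hak hf0
      _ ≤ eMinBer τ (n - 1) k / k * k := mul_le_mul_of_nonneg_right (min_le_right _ _) hk0.le
      _ = eMinBer τ (n - 1) k := div_mul_cancel₀ _ hk0.ne'
      _ ≤ eMinBer τ n k := eMinBer_pred_le hτ

lemma IsTypeDist.ostBenchmark_le_innerLP_OST (hG : IsTypeDist n m G) (hk : 1 ≤ k)
    (hJ : J ∈ Icc 1 m) (hρ : ρ ∈ Set.Icc (0 : ℝ) 1) {Q : ℕ → ℝ} (hQm : Q m = k)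
    (hQ : ∀ j ∈ Icc 1 m, Q j ≤ QExAnte k n G j) :
    ostBenchmark k n (tauOf G J ρ) ≤ innerLP_OST k n m G J ρ Q := by
  rw [innerLP_OST_eq_maxScale (hG.mapsTo_tauOf hJ hρ)]
  refine le_maxScale (j₀ := m) (by grind) (by rw [hQm]; exact_mod_cast hk) fun j hj => ?_
  exact hG.ostBenchmark_mul_le_ostCover hk hJ hρ hj
    ((hQ j hj).trans (min_le_left _ _)) ((hQ j hj).trans (min_le_right _ _))

lemma IsTypeDist.innerLP_OST_le_one (hG : IsTypeDist n m G) (hk : 1 ≤ k)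
    (hJ : J ∈ Icc 1 m) (hρ : ρ ∈ Set.Icc (0 : ℝ) 1) {Q : ℕ → ℝ} (hQm : Q m = k) :
    innerLP_OST k n m G J ρ Q ≤ 1 := by
  have hτ := hG.mapsTo_tauOf hJ hρ
  rw [innerLP_OST_eq_maxScale hτ]
  refine maxScale_le (j₀ := m) (by grind) (by rw [hQm]; exact_mod_cast hk) zero_le_one ?_
  rw [ostCover_of_ge fun i hi => (hG i hi).2.1 ▸ (hτ (Finset.mem_Icc.1 hi)).2, hQm, one_mul]
  exact eMinBer_le hτ

lemma IsTypeDist.innerLP_OST_QExAnte_le_QProph (hG : IsTypeDist n m G) (hk : 1 ≤ k)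
    (hkn : k ≤ n) (hJ : J ∈ Icc 1 m) (hρ : ρ ∈ Set.Icc (0 : ℝ) 1) :
    innerLP_OST k n m G J ρ (QExAnte k n G) ≤ innerLP_OST k n m G J ρ (QProph k n G) := by
  have hτ := hG.mapsTo_tauOf hJ hρ
  simp only [innerLP_OST_eq_maxScale hτ]
  refine maxScale_anti (j₀ := m) (by grind) (by rw [hG.QProph_top hkn]; exact_mod_cast hk)
    (fun j hj => eMinBer_nonneg fun i hi => hG.apply_mem_Icc (Finset.mem_Icc.2 hi) (by grind))
    (fun j hj => hG.QProph_le_QExAnte (by grind))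
    (fun j hj => ostCover_nonneg hτ fun i hi => (hG.apply_mem_Icc hi (by grind)).1)

end innerLP

lemma exists_zero_of_chain {f : ℕ → ℝ → ℝ} (hf : ∀ J, ContinuousOn (f J) (Set.Icc 0 1))
    (hglue : ∀ J, f (J + 1) 0 = f J 1) (h0 : 0 < f 0 1) {m : ℕ} (hm : f m 1 ≤ 0) :
    ∃ J ∈ Icc 1 m, ∃ ρ ∈ Set.Ioc (0 : ℝ) 1, f J ρ = 0 := by
  classical
  have hex : ∃ J, f J 1 ≤ 0 := ⟨m, hm⟩
  obtain ⟨J, hJ⟩ : ∃ J, Nat.find hex = J + 1 :=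
    Nat.exists_eq_succ_of_ne_zero fun h => (Nat.find_spec hex).not_gt (h ▸ h0)
  have hstart : 0 < f (J + 1) 0 := by
    rw [hglue]
    exact lt_of_not_ge (Nat.find_min hex (by omega))
  obtain ⟨ρ, hρ, hρ0⟩ := intermediate_value_Icc' zero_le_one (hf (J + 1))
    ⟨hJ ▸ Nat.find_spec hex, hstart.le⟩
  refine ⟨J + 1, mem_Icc.2 ⟨by omega, hJ ▸ Nat.find_min' hex hm⟩, ρ,
    ⟨lt_of_le_of_ne hρ.1 ?_, hρ.2⟩, hρ0⟩
  rintro rfl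
  exact hstart.ne' hρ0

lemma tauOf_succ_zero (G : ℕ → ℕ → ℝ) (J : ℕ) : tauOf G (J + 1) 0 = tauOf G J 1 := by
  funext i
  simp [tauOf]

lemma IsTypeDist.exists_probLt_eq_eMinBer_div {k n m : ℕ} {G : ℕ → ℕ → ℝ}
    (hG : IsTypeDist n m G) (hk : 1 ≤ k) (hkn : k < n) : ∃ J ∈ Icc 1 m, ∃ ρ ∈ Set.Ioc (0 : ℝ) 1,
      probLt (tauOf G J ρ) (n - 1) k = eMinBer (tauOf G J ρ) (n - 1) k / k := by
  have hsub : ∀ i ∈ Set.Icc 1 (n - 1), i ∈ Icc 1 n := fun i hi => by grind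
  have hcont : ∀ J i, Continuous fun ρ => tauOf G J ρ i := fun J i => by unfold tauOf; fun_prop
  obtain ⟨J, hJ, ρ, hρ, h⟩ := exists_zero_of_chain
    (f := fun J ρ => probLt (tauOf G J ρ) (n - 1) k - eMinBer (tauOf G J ρ) (n - 1) k / k)
    (fun J => by
      simp only [probLt_eq_bernExpect, eMinBer_eq_bernExpect]
      exact ((bernExpect.continuous_of_continuous (hcont J)).sub
        ((bernExpect.continuous_of_continuous (hcont J)).div_const _)).continuousOn)
    (fun J => by simp only [tauOf_succ_zero])
    (by
      have h0 : ∀ i ∈ Set.Icc 1 (n - 1), tauOf G 0 1 i = 0 := fun i hi => by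
        simp [tauOf, (hG i (hsub i hi)).1]
      simp [probLt_of_eq_zero h0 hk, eMinBer_of_eq_zero h0])
    (m := m) (by
      have h1 : ∀ i ∈ Set.Icc 1 (n - 1), tauOf G m 1 i = 1 := fun i hi => by
        simp [tauOf, (hG i (hsub i hi)).2.1]
      have hk0 : (k : ℝ) ≠ 0 := by positivity
      rw [probLt_of_eq_one (k := k) h1 (by omega), eMinBer_of_eq_one h1 (by omega), div_self hk0]
      norm_num)
  exact ⟨J, hJ, ρ, hρ, sub_eq_zero.1 h⟩

/-- Agent `n` has type `1` with probability `q`, every other agent `i` has type `2` with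
probability `t i`, and all remaining mass sits on type `3`. -/
noncomputable def hardInstance (n : ℕ) (t : ℕ → ℝ) (q : ℝ) : ℕ → ℕ → ℝ
  | _, 0 => 0
  | i, 1 => if i = n then q else 0
  | i, 2 => if i = n then q else t i
  | _, _ => 1

section hardInstance

variable {k n : ℕ} {t : ℕ → ℝ} {q : ℝ}

lemma isTypeDist_hardInstance (ht : Set.MapsTo t (Set.Icc 1 (n - 1)) (Set.Icc 0 1))
    (hq : q ∈ Set.Icc (0 : ℝ) 1) : IsTypeDist n 3 (hardInstance n t q) := by
  intro i hi
  refine ⟨rfl, rfl, fun j hj => ?_⟩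
  obtain ⟨hj1, hj3⟩ := mem_Icc.1 hj
  have hti : i ≠ n → t i ∈ Set.Icc 0 1 := fun h => ht (by grind)
  interval_cases j <;> by_cases h : i = n <;> simp [hardInstance, h, hq.1, hq.2]
  exacts [(hti h).1, (hti h).2]

lemma hardInstance_two_of_lt {i : ℕ} (hi : i ∈ Set.Icc 1 (n - 1)) :
    hardInstance n t q i 2 = t i := by
  simp [hardInstance, show i ≠ n by grind]

lemma innerLP_OST_hardInstance_le_of_le_two (hk : 1 ≤ k) (hkn : k < n)
    (ht : Set.MapsTo t (Set.Icc 1 (n - 1)) (Set.Icc 0 1)) (hq : q ∈ Set.Icc (0 : ℝ) 1)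
    {J : ℕ} (hJ : J ∈ Icc 1 2) {ρ : ℝ} (hρ : ρ ∈ Set.Icc (0 : ℝ) 1) :
    innerLP_OST k n 3 (hardInstance n t q) J ρ (QProph k n (hardInstance n t q))
      ≤ (eMinBer t (n - 1) k + q) / k := by
  set G := hardInstance n t q
  have hG : IsTypeDist n 3 G := isTypeDist_hardInstance ht hq
  have hJ3 : J ∈ Icc 1 3 := by grind
  have hτ := hG.mapsTo_tauOf hJ3 hρ
  have hτ_le : ∀ i ∈ Icc 1 n, tauOf G J ρ i ≤ G i 2 := fun i hi =>
    (hG.tauOf_mem_Icc hJ3 hρ hi).2.trans (hG.mono hi (mem_Icc.1 hJ).2 (by norm_num))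
  have hk0 : (0 : ℝ) < k := by exact_mod_cast hk
  rw [innerLP_OST_eq_maxScale hτ]
  refine maxScale_le (j₀ := 3) (by simp) (by rw [hG.QProph_top hkn.le]; exact hk0)
    (div_nonneg (add_nonneg (eMinBer_nonneg ht) hq.1) hk0.le) ?_
  rw [ostCover_of_ge fun i hi => (hτ (Finset.mem_Icc.1 hi)).2, hG.QProph_top hkn.le,
    div_mul_cancel₀ _ hk0.ne']
  obtain ⟨n', rfl⟩ : ∃ n', n = n' + 1 := ⟨n - 1, by omega⟩
  have hτ' := mapsTo_Icc_one_of_le hτ n'.le_succ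
  calc eMinBer (tauOf G J ρ) (n' + 1) k ≤ eMinBer (tauOf G J ρ) n' k + tauOf G J ρ (n' + 1) :=
        eMinBer_succ_le hτ
    _ ≤ eMinBer t n' k + q := by
        gcongr
        · exact eMinBer_mono_prob hτ' ht fun i hi =>
            (hτ_le i (by grind)).trans (hardInstance_two_of_lt hi).le
        · simpa [G, hardInstance] using hτ_le (n' + 1) (by simp)

/-- Agent `n`'s type `1` is served only when fewer than `k` others were accepted, which is no
likelier than under `t`. -/
lemma innerLP_OST_hardInstance_le_of_three (hk : 1 ≤ k) (hkn : k < n)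
    (ht : Set.MapsTo t (Set.Icc 1 (n - 1)) (Set.Icc 0 1)) (hq : q ∈ Set.Ioc (0 : ℝ) 1)
    {ρ : ℝ} (hρ : ρ ∈ Set.Icc (0 : ℝ) 1) :
    innerLP_OST k n 3 (hardInstance n t q) 3 ρ (QProph k n (hardInstance n t q))
      ≤ probLt t (n - 1) k := by
  set G := hardInstance n t q
  have hG : IsTypeDist n 3 G := isTypeDist_hardInstance ht (Set.Ioc_subset_Icc_self hq)
  have hτ := hG.mapsTo_tauOf (J := 3) (by simp) hρ
  have hn : n ∈ Icc 1 n := by grind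
  have hsum : ∀ f : ℕ → ℝ, ∑ i ∈ Icc 1 n, G i 1 * f i = q * f n := fun f =>
    (sum_eq_single_of_mem n hn fun i _ hi => by simp [G, hardInstance, hi]).trans
      (by simp [G, hardInstance])
  have hzero : ∀ i ∈ Set.Icc 1 (n - 1), G i 1 = 0 := fun i hi => by
    simp [G, hardInstance, show i ≠ n by grind]
  have hQ1 : QProph k n G 1 = q := by
    rw [QProph, eMinBer_eq_sum, hsum, probLt_of_eq_zero hzero hk, mul_one]
  rw [innerLP_OST_eq_maxScale hτ]
  refine maxScale_le (j₀ := 1) (by simp) (by rw [hQ1]; exact hq.1) (probLt_nonneg ht) ?_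
  rw [hQ1, mul_comm]
  refine (ostCover_le hτ).trans ?_
  rw [hsum]
  refine mul_le_mul_of_nonneg_left (probLt_anti_prob ht (mapsTo_Icc_one_of_le hτ (by omega))
    fun i hi => ?_) hq.1.le
  rw [← hardInstance_two_of_lt (t := t) (q := q) hi]
  simpa using (hG.tauOf_mem_Icc (J := 3) (by simp) hρ (by grind : i ∈ Icc 1 n)).1

end hardInstance

noncomputable def supOverThresholds (m : ℕ) (F : ℕ → ℝ → ℝ) : ℝ :=
  sSup {w : ℝ | ∃ J ∈ Finset.Icc 1 m, ∃ ρ ∈ Set.Ioc (0 : ℝ) 1, w = F J ρ}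

noncomputable def worstCase (n : ℕ) (V : ℕ → (ℕ → ℕ → ℝ) → ℕ → ℝ → ℝ) : ℝ :=
  sInf {v : ℝ | ∃ m, 1 ≤ m ∧ ∃ G, IsTypeDist n m G ∧ v = supOverThresholds m (V m G)}

def UnitValued (n : ℕ) (V : ℕ → (ℕ → ℕ → ℝ) → ℕ → ℝ → ℝ) : Prop :=
  ∀ m, 1 ≤ m → ∀ G, IsTypeDist n m G →
    ∀ J ∈ Icc 1 m, ∀ ρ ∈ Set.Ioc (0 : ℝ) 1, V m G J ρ ∈ Set.Icc (0 : ℝ) 1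

section supOverThresholds

variable {m : ℕ} {F F' : ℕ → ℝ → ℝ}

lemma le_supOverThresholds (hF : ∀ J ∈ Icc 1 m, ∀ ρ ∈ Set.Ioc (0 : ℝ) 1, F J ρ ≤ 1)
    {J : ℕ} (hJ : J ∈ Icc 1 m) {ρ : ℝ} (hρ : ρ ∈ Set.Ioc (0 : ℝ) 1) :
    F J ρ ≤ supOverThresholds m F :=
  le_csSup ⟨1, by rintro _ ⟨J, hJ, ρ, hρ, rfl⟩; exact hF J hJ ρ hρ⟩ ⟨J, hJ, ρ, hρ, rfl⟩

lemma supOverThresholds_le (hm : 1 ≤ m) {b : ℝ}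
    (hF : ∀ J ∈ Icc 1 m, ∀ ρ ∈ Set.Ioc (0 : ℝ) 1, F J ρ ≤ b) : supOverThresholds m F ≤ b :=
  csSup_le ⟨_, 1, mem_Icc.2 ⟨le_rfl, hm⟩, 1, ⟨one_pos, le_rfl⟩, rfl⟩
    (by rintro _ ⟨J, hJ, ρ, hρ, rfl⟩; exact hF J hJ ρ hρ)

lemma supOverThresholds_mono (hm : 1 ≤ m)
    (hF' : ∀ J ∈ Icc 1 m, ∀ ρ ∈ Set.Ioc (0 : ℝ) 1, F' J ρ ≤ 1)
    (h : ∀ J ∈ Icc 1 m, ∀ ρ ∈ Set.Ioc (0 : ℝ) 1, F J ρ ≤ F' J ρ) :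
    supOverThresholds m F ≤ supOverThresholds m F' :=
  supOverThresholds_le hm fun J hJ ρ hρ => (h J hJ ρ hρ).trans (le_supOverThresholds hF' hJ hρ)

end supOverThresholds

section worstCase

variable {n : ℕ} {V V' : ℕ → (ℕ → ℕ → ℝ) → ℕ → ℝ → ℝ}

lemma isTypeDist_one (n : ℕ) : IsTypeDist n 1 fun _ j => if j = 0 then 0 else 1 := by
  refine fun _ _ => ⟨rfl, rfl, fun j hj => ?_⟩
  obtain rfl : j = 1 := by grind
  norm_num

lemma UnitValued.bddBelow (hV : UnitValued n V) :
    BddBelow {v : ℝ | ∃ m, 1 ≤ m ∧ ∃ G, IsTypeDist n m G ∧ v = supOverThresholds m (V m G)} := by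
  refine ⟨0, ?_⟩
  rintro _ ⟨m, hm, G, hG, rfl⟩
  have hV := hV m hm G hG
  exact (hV 1 (mem_Icc.2 ⟨le_rfl, hm⟩) 1 ⟨one_pos, le_rfl⟩).1.trans
    (le_supOverThresholds (fun J hJ ρ hρ => (hV J hJ ρ hρ).2) (mem_Icc.2 ⟨le_rfl, hm⟩)
      ⟨one_pos, le_rfl⟩)

lemma worstCase_le_of_forall_approx (hV : UnitValued n V)
    (h : ∀ m, 1 ≤ m → ∀ G, IsTypeDist n m G → ∀ ε > 0, ∃ m', 1 ≤ m' ∧ ∃ G',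
      IsTypeDist n m' G' ∧ supOverThresholds m' (V m' G') ≤ supOverThresholds m (V' m G) + ε) :
    worstCase n V ≤ worstCase n V' := by
  refine le_csInf ⟨_, 1, le_rfl, _, isTypeDist_one n, rfl⟩ ?_
  rintro _ ⟨m, hm, G, hG, rfl⟩
  refine le_of_forall_pos_le_add fun ε hε => ?_
  obtain ⟨m', hm', G', hG', hle⟩ := h m hm G hG ε hε
  exact (csInf_le hV.bddBelow ⟨m', hm', G', hG', rfl⟩).trans hle

lemma worstCase_mono (hV : UnitValued n V) (hV' : UnitValued n V')
    (h : ∀ m, 1 ≤ m → ∀ G, IsTypeDist n m G →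
      ∀ J ∈ Icc 1 m, ∀ ρ ∈ Set.Ioc (0 : ℝ) 1, V m G J ρ ≤ V' m G J ρ) :
    worstCase n V ≤ worstCase n V' :=
  worstCase_le_of_forall_approx hV fun m hm G hG _ hε => ⟨m, hm, G, hG,
    (supOverThresholds_mono hm (fun J hJ ρ hρ => (hV' m hm G hG J hJ ρ hρ).2)
      (h m hm G hG)).trans (le_add_of_nonneg_right hε.le)⟩

end worstCase

section benchmarks

variable {k n : ℕ}

lemma unitValued_ostBenchmark : UnitValued n fun _ G J ρ => ostBenchmark k n (tauOf G J ρ) :=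
  fun _ _ _ hG _ hJ _ hρ => ostBenchmark_mem_Icc <|
    mapsTo_Icc_one_of_le (hG.mapsTo_tauOf hJ (Set.Ioc_subset_Icc_self hρ)) (n.sub_le 1)

lemma unitValued_innerLP_OST (hk : 1 ≤ k) {Q : (ℕ → ℕ → ℝ) → ℕ → ℝ}
    (hQ : ∀ m G, IsTypeDist n m G → Q G m = k ∧ ∀ j ∈ Icc 1 m, Q G j ≤ QExAnte k n G j) :
    UnitValued n fun m G J ρ => innerLP_OST k n m G J ρ (Q G) := by
  intro m hm G hG J hJ ρ hρ
  have hρ' := Set.Ioc_subset_Icc_self hρ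
  exact ⟨(unitValued_ostBenchmark m hm G hG J hJ ρ hρ).1.trans
      (hG.ostBenchmark_le_innerLP_OST hk hJ hρ' (hQ m G hG).1 (hQ m G hG).2),
    hG.innerLP_OST_le_one hk hJ hρ' (hQ m G hG).1⟩

lemma IsTypeDist.exists_supOverThresholds_QProph_le {m : ℕ} {G : ℕ → ℕ → ℝ}
    (hG : IsTypeDist n m G) (hk : 1 ≤ k) (hkn : k < n) {ε : ℝ} (hε : 0 < ε) :
    ∃ m', 1 ≤ m' ∧ ∃ G', IsTypeDist n m' G' ∧
      supOverThresholds m' (fun J ρ => innerLP_OST k n m' G' J ρ (QProph k n G'))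
        ≤ supOverThresholds m (fun J ρ => ostBenchmark k n (tauOf G J ρ)) + ε := by
  obtain ⟨J, hJ, ρ, hρ, hcross⟩ := hG.exists_probLt_eq_eMinBer_div hk hkn
  set t := tauOf G J ρ
  have ht := mapsTo_Icc_one_of_le (hG.mapsTo_tauOf hJ (Set.Ioc_subset_Icc_self hρ)) (n.sub_le 1)
  set q := min ε 1
  have hq : q ∈ Set.Ioc (0 : ℝ) 1 := ⟨lt_min hε one_pos, min_le_right _ _⟩
  have hqk : q / k ≤ ε := (div_le_self hq.1.le (by exact_mod_cast hk)).trans (min_le_left _ _)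
  have hqk0 : 0 ≤ q / k := div_nonneg hq.1.le k.cast_nonneg
  refine ⟨3, by norm_num, hardInstance n t q,
    isTypeDist_hardInstance ht (Set.Ioc_subset_Icc_self hq), ?_⟩
  calc _ ≤ probLt t (n - 1) k + q / k := by
        refine supOverThresholds_le (by norm_num) fun J' hJ' ρ' hρ' => ?_
        have hρ' := Set.Ioc_subset_Icc_self hρ'
        rcases (by grind : J' ∈ Icc 1 2 ∨ J' = 3) with hJ' | rfl
        · refine (innerLP_OST_hardInstance_le_of_le_two hk hkn ht
            (Set.Ioc_subset_Icc_self hq) hJ' hρ').trans ?_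
          rw [add_div, ← hcross]
        · exact (innerLP_OST_hardInstance_le_of_three hk hkn ht hq hρ').trans
            (le_add_of_nonneg_right hqk0)
    _ ≤ ostBenchmark k n t + ε := by rw [ostBenchmark, ← hcross, min_self]; gcongr
    _ ≤ _ := by
        gcongr
        exact le_supOverThresholds (F := fun J ρ => ostBenchmark k n (tauOf G J ρ))
          (fun J hJ ρ hρ => (unitValued_ostBenchmark _ (by grind) G hG J hJ ρ hρ).2) hJ hρ

end benchmarks

/-- Theorem `chawlaTight`: the worst-case OST guarantees relative to the prophet
and to the ex-ante relaxation coincide, and both equal the worst-case value of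
`sup_{J,ρ} min{P(Σ_{i<n} Ber(τ_i(J,ρ)) < k), E[min{Σ_{i<n} Ber(τ_i(J,ρ)), k}]/k}`. -/
theorem stmt9 (k n : ℕ) (hk : 1 ≤ k) (hkn : k < n) :
    (sInf {v : ℝ | ∃ m, 1 ≤ m ∧ ∃ G, IsTypeDist n m G ∧
        v = sSup {w : ℝ | ∃ J ∈ Finset.Icc 1 m, ∃ ρ ∈ Set.Ioc (0:ℝ) 1,
          w = innerLP_OST k n m G J ρ (QProph k n G)}}
      = sInf {v : ℝ | ∃ m, 1 ≤ m ∧ ∃ G, IsTypeDist n m G ∧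
          v = sSup {w : ℝ | ∃ J ∈ Finset.Icc 1 m, ∃ ρ ∈ Set.Ioc (0:ℝ) 1,
            w = innerLP_OST k n m G J ρ (QExAnte k n G)}}) ∧
    (sInf {v : ℝ | ∃ m, 1 ≤ m ∧ ∃ G, IsTypeDist n m G ∧
        v = sSup {w : ℝ | ∃ J ∈ Finset.Icc 1 m, ∃ ρ ∈ Set.Ioc (0:ℝ) 1,
          w = innerLP_OST k n m G J ρ (QExAnte k n G)}}
      = sInf {v : ℝ | ∃ m, 1 ≤ m ∧ ∃ G, IsTypeDist n m G ∧
          v = sSup {w : ℝ | ∃ J ∈ Finset.Icc 1 m, ∃ ρ ∈ Set.Ioc (0:ℝ) 1,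
            w = min (probLt (tauOf G J ρ) (n-1) k)
                    (eMinBer (tauOf G J ρ) (n-1) k / k)}}) := by
  have hP : UnitValued n fun m G J ρ => innerLP_OST k n m G J ρ (QProph k n G) :=
    unitValued_innerLP_OST hk fun _ _ hG =>
      ⟨hG.QProph_top hkn.le, fun _ hj => hG.QProph_le_QExAnte (mem_Icc.1 hj).2⟩
  have hE : UnitValued n fun m G J ρ => innerLP_OST k n m G J ρ (QExAnte k n G) :=
    unitValued_innerLP_OST hk fun _ _ hG => ⟨hG.QExAnte_top hkn.le, fun _ _ => le_rfl⟩
  have hEP := worstCase_mono hE hP fun _ _ _ hG _ hJ _ hρ =>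
    hG.innerLP_OST_QExAnte_le_QProph hk hkn.le hJ (Set.Ioc_subset_Icc_self hρ)
  have hBE := worstCase_mono unitValued_ostBenchmark hE fun _ _ _ hG _ hJ _ hρ =>
    hG.ostBenchmark_le_innerLP_OST hk hJ (Set.Ioc_subset_Icc_self hρ)
      (hG.QExAnte_top hkn.le) fun _ _ => le_rfl
  have hPB := worstCase_le_of_forall_approx hP fun _ _ _ hG _ hε =>
    hG.exists_supOverThresholds_QProph_le hk hkn hε
  exact ⟨le_antisymm (hPB.trans hBE) hEP, le_antisymm (hEP.trans hPB) hBE⟩
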